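/- Superadditivity upper bound (combination direction): for any v, v' ∈ F_2^Q and sizes t_1, t_2 ≥ 1, if B_1 is a t_1-error-building block for v' and B_2 is a t_2-error-building block for v' ⊕ v, then the multiset sum B_1 ⊎ B_2 is a (t_1+t_2)-error-building block for v with penalty M(B_1) + M(B_2); hence m_{t_1+t_2}(v) ≤ m_{t_1}(v') + m_{t_2}(v' ⊕ v) for every v'. -/

import Mathlib

open scoped ENNReal

/-- Mod-2 sum of the columns of `h` indexed by the multiset `S` (with multiplicity). -/
def colSum {N Q : ℕ} (h : Fin N → Fin Q → ZMod 2) (S : Multiset (Fin N)) :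
    Fin Q → ZMod 2 :=
  (S.map h).sum

/-- Block penalty: sum of the nonnegative reliabilities over `S` (with multiplicity). -/
def penalty {N : ℕ} (w : Fin N → NNReal) (S : Multiset (Fin N)) : NNReal :=
  (S.map w).sum

/-- Minimal penalty of a `t`-error-building block for `v` (`⊤` if none exists). -/
noncomputable def mPen {N Q : ℕ} (h : Fin N → Fin Q → ZMod 2) (w : Fin N → NNReal)
    (t : ℕ) (v : Fin Q → ZMod 2) : ℝ≥0∞ :=
  sInf ((fun S => ((penalty w S : NNReal) : ℝ≥0∞)) ''
    {S : Multiset (Fin N) | Multiset.card S = t ∧ colSum h S = v})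

def IsBuildingBlock {N Q : ℕ} (h : Fin N → Fin Q → ZMod 2) (t : ℕ) (v : Fin Q → ZMod 2)
    (S : Multiset (Fin N)) : Prop :=
  Multiset.card S = t ∧ colSum h S = v

@[simp]
lemma colSum_add {N Q : ℕ} (h : Fin N → Fin Q → ZMod 2) (S T : Multiset (Fin N)) :
    colSum h (S + T) = colSum h S + colSum h T := by
  simp [colSum]

@[simp]
lemma penalty_add {N : ℕ} (w : Fin N → NNReal) (S T : Multiset (Fin N)) :
    penalty w (S + T) = penalty w S + penalty w T := by
  simp [penalty]

lemma IsBuildingBlock.add {N Q : ℕ} {h : Fin N → Fin Q → ZMod 2} {v v' : Fin Q → ZMod 2}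
    {t1 t2 : ℕ} {B1 B2 : Multiset (Fin N)} (hB1 : IsBuildingBlock h t1 v' B1)
    (hB2 : IsBuildingBlock h t2 (v' + v) B2) : IsBuildingBlock h (t1 + t2) v (B1 + B2) := by
  refine ⟨by simp [hB1.1, hB2.1], ?_⟩
  rw [colSum_add, hB1.2, hB2.2, ← add_assoc, ZModModule.add_self, zero_add]

lemma mPen_eq_iInf {N Q : ℕ} (h : Fin N → Fin Q → ZMod 2) (w : Fin N → NNReal) (t : ℕ)
    (v : Fin Q → ZMod 2) :
    mPen h w t v = ⨅ S : {S // IsBuildingBlock h t v S}, (penalty w S : ℝ≥0∞) :=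
  sInf_image'

lemma mPen_le_penalty {N Q : ℕ} {h : Fin N → Fin Q → ZMod 2} (w : Fin N → NNReal) {t : ℕ}
    {v : Fin Q → ZMod 2} {S : Multiset (Fin N)} (hS : IsBuildingBlock h t v S) :
    mPen h w t v ≤ penalty w S :=
  sInf_le ⟨S, hS, rfl⟩

lemma mPen_add_le {N Q : ℕ} (h : Fin N → Fin Q → ZMod 2) (w : Fin N → NNReal) (t1 t2 : ℕ)
    (v v' : Fin Q → ZMod 2) :
    mPen h w (t1 + t2) v ≤ mPen h w t1 v' + mPen h w t2 (v' + v) := by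
  rw [mPen_eq_iInf h w t1, mPen_eq_iInf h w t2]
  refine ENNReal.le_iInf_add_iInf fun B1 B2 => ?_
  calc mPen h w (t1 + t2) v ≤ penalty w (B1.1 + B2.1) := mPen_le_penalty w (B1.2.add B2.2)
    _ = (penalty w B1 : ℝ≥0∞) + penalty w B2 := by simp

theorem stmt12_general {N Q : ℕ} (h : Fin N → Fin Q → ZMod 2) (w : Fin N → NNReal)
    (v v' : Fin Q → ZMod 2) (t1 t2 : ℕ)
    (B1 B2 : Multiset (Fin N))
    (hB1 : Multiset.card B1 = t1 ∧ colSum h B1 = v')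
    (hB2 : Multiset.card B2 = t2 ∧ colSum h B2 = v' + v) :
    (Multiset.card (B1 + B2) = t1 + t2 ∧ colSum h (B1 + B2) = v ∧
      penalty w (B1 + B2) = penalty w B1 + penalty w B2) ∧
    ∀ v'' : Fin Q → ZMod 2,
      mPen h w (t1 + t2) v ≤ mPen h w t1 v'' + mPen h w t2 (v'' + v) := by
  have hB : IsBuildingBlock h (t1 + t2) v (B1 + B2) := IsBuildingBlock.add hB1 hB2
  exact ⟨⟨hB.1, hB.2, penalty_add w B1 B2⟩, mPen_add_le h w t1 t2 v⟩

/-- combination direction: a `t₁`-block for `v'` and a `t₂`-block for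
`v' ⊕ v` combine to a `(t₁+t₂)`-block for `v` with additive penalty; hence
`m_{t₁+t₂}(v) ≤ m_{t₁}(v'') + m_{t₂}(v'' ⊕ v)` for every `v''`. -/
theorem stmt12 {N Q : ℕ} (h : Fin N → Fin Q → ZMod 2) (w : Fin N → NNReal)
    (v v' : Fin Q → ZMod 2) (t1 t2 : ℕ) (ht1 : 1 ≤ t1) (ht2 : 1 ≤ t2)
    (B1 B2 : Multiset (Fin N))
    (hB1 : Multiset.card B1 = t1 ∧ colSum h B1 = v')
    (hB2 : Multiset.card B2 = t2 ∧ colSum h B2 = v' + v) :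
    (Multiset.card (B1 + B2) = t1 + t2 ∧ colSum h (B1 + B2) = v ∧
      penalty w (B1 + B2) = penalty w B1 + penalty w B2) ∧
    ∀ v'' : Fin Q → ZMod 2,
      mPen h w (t1 + t2) v ≤ mPen h w t1 v'' + mPen h w t2 (v'' + v) :=
  stmt12_general h w v v' t1 t2 B1 B2 hB1 hB2
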